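/- Let h > 0 with 1/h an integer, and let Ω = (0,1)^n with grid Ω^h = closure(Ω) ∩ hℤ^n. For a mesh function v^h vanishing on the boundary grid points ∂Ω^h and with finite discrete H^1 norm, there exists a constant C_p > 0 independent of h such that |v^h|_{1,h} ≥ C_p ||v^h||_{0,h}, where ||v^h||_{0,h}^2 = h^n Σ_{x ∈ Ω_0^h} v^h(x)^2 and |v^h|_{1,h}^2 = Σ_{i=1}^n ||∂^i_+ v^h||_{0,h}^2 with ∂^i_+ v^h(x) = (v^h(x + h e^i) - v^h(x))/h. -/

import Mathlib

/-!
Along a coordinate direction, every interior value of `v` telescopes to the vanishing value at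
the far boundary: `v k = -∑ (v (k + eᵢ) - v k)` over the rest of the grid line. Cauchy–Schwarz
bounds `v k ²` by `(N - 1)` times the squared differences on that whole line, and summing over the
box counts each line `N - 1` times. Hence `∑ v² ≤ (N - 1)² ∑ (v (k + eᵢ) - v k)²
≤ h⁻² ∑ (v (k + eᵢ) - v k)²`, which gives the inequality with `C_p = 1`.
-/

open Finset Function

theorem Int.sum_Ico_sub {M : Type*} [AddCommGroup M] (g : ℤ → M) {a b : ℤ} (hab : a ≤ b) :
    ∑ j ∈ Ico a b, (g (j + 1) - g j) = g b - g a := by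
  induction b, hab using Int.leInduction with
  | base => simp
  | succ b hab ih =>
    rw [Ico_add_one_right_eq_Icc, ← Ico_insert_right hab, sum_insert (by simp), ih]
    abel

theorem sq_le_mul_sum_sq_sub_of_eq_zero (g : ℤ → ℝ) {a m b : ℤ} (ham : a ≤ m) (hmb : m ≤ b)
    (hb : g b = 0) : g m ^ 2 ≤ (b - a) * ∑ j ∈ Ico a b, (g (j + 1) - g j) ^ 2 := by
  have hcard : (#(Ico m b) : ℝ) ≤ b - a := by
    have : ((#(Ico m b) : ℤ) : ℝ) = ((b - m : ℤ) : ℝ) := congrArg _ (Int.card_Ico_of_le m b hmb)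
    push_cast at this
    linarith [(Int.cast_le (R := ℝ)).2 ham]
  calc g m ^ 2 = (∑ j ∈ Ico m b, (g (j + 1) - g j)) ^ 2 := by
        rw [Int.sum_Ico_sub g hmb, hb, zero_sub, neg_sq]
    _ ≤ #(Ico m b) * ∑ j ∈ Ico m b, (g (j + 1) - g j) ^ 2 := sq_sum_le_card_mul_sum_sq
    _ ≤ (b - a) * ∑ j ∈ Ico a b, (g (j + 1) - g j) ^ 2 := by
        gcongr
        exact sub_nonneg.2 (Int.cast_le.2 (ham.trans hmb))

section

variable {ι α : Type*} [Fintype ι] [DecidableEq ι] [PartialOrder α] [LocallyFiniteOrder α]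
  [DecidableEq α]

theorem update_mem_Icc {lo hi k : ι → α} {i : ι} {a : α}
    (hk : k ∈ Icc lo hi) (ha : a ∈ Icc (lo i) (hi i)) : update k i a ∈ Icc lo hi := by
  rw [mem_Icc] at hk ha ⊢
  exact ⟨le_update_iff.2 ⟨ha.1, fun j _ => hk.1 j⟩, update_le_iff.2 ⟨ha.2, fun j _ => hk.2 j⟩⟩

theorem sum_sum_update_Icc {M : Type*} [AddCommMonoid M] (F : (ι → α) → M) (lo hi : ι → α) (i : ι) :
    ∑ k ∈ Icc lo hi, ∑ a ∈ Icc (lo i) (hi i), F (update k i a)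
      = #(Icc (lo i) (hi i)) • ∑ k ∈ Icc lo hi, F k := by
  -- `(k, a) ↦ (update k i a, k i)` is an involution of `Icc lo hi ×ˢ Icc (lo i) (hi i)`.
  calc _ = ∑ p ∈ Icc lo hi ×ˢ Icc (lo i) (hi i), F p.1 := by
        rw [← sum_product']
        refine sum_nbij' (fun p => (update p.1 i p.2, p.1 i)) (fun p => (update p.1 i p.2, p.1 i))
          ?_ ?_ ?_ ?_ ?_
        iterate 2
          rintro ⟨k, a⟩ hp
          rw [mem_product] at hp ⊢
          have hk := mem_Icc.1 hp.1
          exact ⟨update_mem_Icc hp.1 hp.2, mem_Icc.2 ⟨hk.1 i, hk.2 i⟩⟩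
        all_goals simp
    _ = _ := by simp only [sum_product, sum_const, smul_sum]

end

theorem update_add_single {ι : Type*} [DecidableEq ι] (k : ι → ℤ) (i : ι) (a : ℤ) :
    update k i a + Pi.single i 1 = update k i (a + 1) := by
  ext j
  rcases eq_or_ne j i with rfl | hj <;> simp [*]

theorem sum_sq_le_sq_mul_sum_sq_sub_of_eq_zero {ι : Type*} [Fintype ι] [DecidableEq ι]
    (v : (ι → ℤ) → ℝ) (lo hi : ι → ℤ) (i : ι)
    (hv : ∀ k ∈ Icc lo hi, v (update k i (hi i + 1)) = 0) :
    ∑ k ∈ Icc lo hi, v k ^ 2 ≤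
      ((hi i : ℝ) + 1 - lo i) ^ 2 * ∑ k ∈ Icc lo hi, (v (k + Pi.single i 1) - v k) ^ 2 := by
  rcases (Icc lo hi).eq_empty_or_nonempty with hS | hS
  · simp [hS]
  have hcard : (#(Icc (lo i) (hi i)) : ℝ) = (hi i : ℝ) + 1 - lo i := by
    have := Int.card_Icc_of_le (lo i) (hi i) (by linarith [nonempty_Icc.1 hS i])
    exact_mod_cast this
  set F : (ι → ℤ) → ℝ := fun k => (v (k + Pi.single i 1) - v k) ^ 2
  have hslice (k) (hk : k ∈ Icc lo hi) :
      v k ^ 2 ≤ ((hi i : ℝ) + 1 - lo i) * ∑ a ∈ Icc (lo i) (hi i), F (update k i a) := by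
    have hk' := mem_Icc.1 hk
    have := sq_le_mul_sum_sq_sub_of_eq_zero (fun a => v (update k i a)) (hk'.1 i)
      ((hk'.2 i).trans (Int.le_add_one le_rfl)) (hv k hk)
    simpa [F, update_add_single, Ico_add_one_right_eq_Icc] using this
  calc ∑ k ∈ Icc lo hi, v k ^ 2
      ≤ ∑ k ∈ Icc lo hi, ((hi i : ℝ) + 1 - lo i) * ∑ a ∈ Icc (lo i) (hi i), F (update k i a) :=
        sum_le_sum hslice
    _ = ((hi i : ℝ) + 1 - lo i) ^ 2 * ∑ k ∈ Icc lo hi, F k := by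
        rw [← mul_sum, sum_sum_update_Icc, nsmul_eq_mul, hcard]
        ring

/-- **Discrete Poincaré inequality** on `Ω = (0,1)^n`. Grid points are indexed by
integer vectors `k`, corresponding to `x = h • k`; interior grid points have all
coordinates in `{1, …, N-1}` where `h * N = 1`; boundary grid points have all
coordinates in `{0, …, N}` with some coordinate equal to `0` or `N`.
For mesh functions vanishing on the boundary grid points, `|v|_{1,h} ≥ C_p ‖v‖_{0,h}`
with `C_p` independent of `h`. -/
theorem discrete_poincare (n : ℕ) (hn : 0 < n) :
    ∃ Cp : ℝ, 0 < Cp ∧ ∀ (h : ℝ) (N : ℕ), 0 < h → h * (N : ℝ) = 1 →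
      ∀ v : (Fin n → ℤ) → ℝ,
        (∀ k : Fin n → ℤ, (∀ i, 0 ≤ k i ∧ k i ≤ (N : ℤ)) →
          (∃ i, k i = 0 ∨ k i = (N : ℤ)) → v k = 0) →
        Cp * Real.sqrt (h ^ n *
            ∑ k ∈ Finset.Icc (fun _ => (1 : ℤ)) (fun _ => (N : ℤ) - 1), (v k) ^ 2)
          ≤ Real.sqrt (∑ i : Fin n, h ^ n *
              ∑ k ∈ Finset.Icc (fun _ => (1 : ℤ)) (fun _ => (N : ℤ) - 1),
                ((v (k + Pi.single i 1) - v k) / h) ^ 2) := by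
  refine ⟨1, one_pos, fun h N hh hhN v hv => ?_⟩
  have hN : (1 : ℝ) ≤ N := by
    rcases N.eq_zero_or_pos with rfl | hN
    · simp at hhN
    · exact_mod_cast hN
  set i : Fin n := ⟨0, hn⟩
  set S := Icc (fun _ : Fin n => (1 : ℤ)) (fun _ => (N : ℤ) - 1)
  have hbdry : ∀ k ∈ S, v (update k i N) = 0 := fun k hk => by
    have hk' : update k i N ∈ Icc (fun _ => 0) (fun _ => (N : ℤ)) :=
      update_mem_Icc (Icc_subset_Icc (fun _ => zero_le_one) (fun _ => by simp) hk) (by simp)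
    exact hv _ (fun x => ⟨(mem_Icc.1 hk').1 x, (mem_Icc.1 hk').2 x⟩) ⟨i, Or.inr (by simp)⟩
  have hS := sum_sq_le_sq_mul_sum_sq_sub_of_eq_zero v (fun _ => 1) (fun _ => (N : ℤ) - 1) i
    fun k hk => by simpa using hbdry k hk
  have hmesh : ((N : ℝ) - 1) ^ 2 ≤ 1 / h ^ 2 := by
    rw [le_div_iff₀ (by positivity)]
    nlinarith
  rw [one_mul]
  gcongr
  refine le_trans ?_ (single_le_sum (f := fun j => h ^ n * ∑ k ∈ S,
    ((v (k + Pi.single j 1) - v k) / h) ^ 2) (fun j _ => by positivity) (mem_univ i))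
  gcongr h ^ n * ?_
  calc _ ≤ ((N : ℝ) - 1) ^ 2 * ∑ k ∈ S, (v (k + Pi.single i 1) - v k) ^ 2 := by simpa using hS
    _ ≤ 1 / h ^ 2 * ∑ k ∈ S, (v (k + Pi.single i 1) - v k) ^ 2 := by gcongr
    _ = _ := by rw [one_div_mul_eq_div, sum_div]; simp only [div_pow]
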